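/- arXiv:cs/0702170 — 4 statements merged into one kernel-verified Lean document; each statement's English description precedes it below -/
import Mathlib

section
/- A value v in D_i has support in the MDD constraint if and only if there exists an edge e lying on some root-to-terminal path such that either s(e) = i and v(e) = v, or s(e) < i < d(e), or i < l(root). -/
/-! A solution supporting `v` yields its path, and the layer-`i` clause of the solution is the
required edge (or `i` precedes the root). Conversely, along a root-to-terminal path assign `v`
to `x i`, the label of an outgoing path edge to every other layer the path leaves, and any
domain value elsewhere: a layer between the root and the terminal that the path never leaves
lies strictly inside one of its (long) edges, since consecutive edges cover every layer. -/

/-- A path in a labeled multigraph: `Reaches E u Q w` means the list of edges `Q`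
(each edge a triple (source, value label, destination)) forms a path from `u` to `w`. -/
inductive Reaches {V : Type} (E : Finset (V × ℕ × V)) : V → List (V × ℕ × V) → V → Prop
  | nil (u : V) : Reaches E u [] u
  | cons {u c w : V} {v : ℕ} {Q : List (V × ℕ × V)} :
      (u, v, c) ∈ E → Reaches E c Q w → Reaches E u ((u, v, c) :: Q) w

/-- The set of solutions of an MDD with long-edge semantics: a full assignment
`ρ` (with `ρ i ∈ D i` for `1 ≤ i ≤ n`) is a solution iff there is a root-to-terminal
path `Q` such that for each layer `i` either some edge of `Q` leaves layer `i` with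
label `ρ i`, or `i` is earlier than the root's layer, or some (long) edge of `Q`
strictly skips layer `i`. -/
def Sols {V : Type} (n : ℕ) (D : ℕ → Finset ℕ) (E : Finset (V × ℕ × V))
    (layer : V → ℕ) (root terminal : V) : Set (ℕ → ℕ) :=
  { ρ | (∀ i ∈ Finset.Icc 1 n, ρ i ∈ D i) ∧
    ∃ Q, Reaches E root Q terminal ∧
      ∀ i ∈ Finset.Icc 1 n,
        (∃ e ∈ Q, layer e.1 = i ∧ e.2.1 = ρ i) ∨ i < layer root ∨
        (∃ e ∈ Q, layer e.1 < i ∧ i < layer e.2.2) }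

namespace Reaches

variable {V : Type} {E : Finset (V × ℕ × V)} {u w : V} {Q : List (V × ℕ × V)}

theorem mem_edges (h : Reaches E u Q w) {e : V × ℕ × V} (he : e ∈ Q) : e ∈ E := by
  induction h with
  | nil => simp at he
  | cons hedge _ ih =>
    rcases List.mem_cons.1 he with rfl | he
    · exact hedge
    · exact ih he

theorem exists_edge_covering (layer : V → ℕ) (h : Reaches E u Q w) {j : ℕ}
    (hu : layer u ≤ j) (hw : j < layer w) :
    ∃ e ∈ Q, layer e.1 ≤ j ∧ j < layer e.2.2 := by
  induction h with
  | nil => omega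
  | @cons u c w v Q hedge _ ih =>
    by_cases hc : j < layer c
    · exact ⟨(u, v, c), List.mem_cons_self, hu, hc⟩
    · obtain ⟨e, heQ, hle, hlt⟩ := ih (by omega) hw
      exact ⟨e, List.mem_cons_of_mem _ heQ, hle, hlt⟩

theorem exists_edge_leaving_or_skipping (layer : V → ℕ) (h : Reaches E u Q w) {j : ℕ}
    (hu : layer u ≤ j) (hw : j < layer w) :
    (∃ e ∈ Q, layer e.1 = j) ∨ ∃ e ∈ Q, layer e.1 < j ∧ j < layer e.2.2 := by
  obtain ⟨e, heQ, hle, hlt⟩ := exists_edge_covering layer h hu hw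
  rcases hle.eq_or_lt with heq | hlt'
  · exact Or.inl ⟨e, heQ, heq⟩
  · exact Or.inr ⟨e, heQ, hlt', hlt⟩

end Reaches

theorem exists_assignment_following_edges {V : Type} (n : ℕ) (D : ℕ → Finset ℕ)
    (layer : V → ℕ) (Q : List (V × ℕ × V)) (hlab : ∀ e ∈ Q, e.2.1 ∈ D (layer e.1))
    (hD : ∀ i ∈ Finset.Icc 1 n, (D i).Nonempty) {i v : ℕ} (hv : v ∈ D i) :
    ∃ ρ : ℕ → ℕ, ρ i = v ∧ (∀ j ∈ Finset.Icc 1 n, ρ j ∈ D j) ∧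
      ∀ j ≠ i, (∃ e ∈ Q, layer e.1 = j) → ∃ e ∈ Q, layer e.1 = j ∧ e.2.1 = ρ j := by
  have hchoice : ∀ j, ∃ x, (j ∈ Finset.Icc 1 n → x ∈ D j) ∧
      ((∃ e ∈ Q, layer e.1 = j) → ∃ e ∈ Q, layer e.1 = j ∧ e.2.1 = x) := by
    intro j
    by_cases hleave : ∃ e ∈ Q, layer e.1 = j
    · obtain ⟨e, heQ, rfl⟩ := hleave
      exact ⟨e.2.1, fun _ => hlab e heQ, fun _ => ⟨e, heQ, rfl, rfl⟩⟩
    · by_cases hj : j ∈ Finset.Icc 1 n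
      · obtain ⟨x, hx⟩ := hD j hj
        exact ⟨x, fun _ => hx, fun h => absurd h hleave⟩
      · exact ⟨0, fun h => absurd h hj, fun h => absurd h hleave⟩
  choose ρ₀ hdom hfollow using hchoice
  refine ⟨Function.update ρ₀ i v, Function.update_self _ _ _, fun j hj => ?_, fun j hji => ?_⟩
  · rcases eq_or_ne j i with rfl | hji
    · simpa using hv
    · simpa [Function.update_of_ne hji] using hdom j hj
  · simpa [Function.update_of_ne hji] using hfollow j

theorem stmt4_general {V : Type} (n : ℕ) (D : ℕ → Finset ℕ) (E : Finset (V × ℕ × V))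
    (layer : V → ℕ) (root terminal : V)
    (hlab : ∀ e ∈ E, e.2.1 ∈ D (layer e.1))
    (hD : ∀ i ∈ Finset.Icc 1 n, (D i).Nonempty)
    (hterm : layer terminal = n + 1)
    (i v : ℕ) (hi : i ∈ Finset.Icc 1 n) (hv : v ∈ D i) :
    (∃ ρ ∈ Sols n D E layer root terminal, ρ i = v) ↔
      ∃ Q, Reaches E root Q terminal ∧
        ((∃ e ∈ Q, (layer e.1 = i ∧ e.2.1 = v) ∨ (layer e.1 < i ∧ i < layer e.2.2)) ∨
          i < layer root) := by
  constructor
  · rintro ⟨ρ, ⟨-, Q, hQ, hcover⟩, rfl⟩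
    refine ⟨Q, hQ, ?_⟩
    rcases hcover i hi with ⟨e, heQ, hleave⟩ | hroot | ⟨e, heQ, hskip⟩
    exacts [Or.inl ⟨e, heQ, Or.inl hleave⟩, Or.inr hroot, Or.inl ⟨e, heQ, Or.inr hskip⟩]
  · rintro ⟨Q, hQ, hsupport⟩
    obtain ⟨ρ, rfl, hdom, hfollow⟩ := exists_assignment_following_edges n D layer Q
      (fun e he => hlab e (hQ.mem_edges he)) hD hv
    refine ⟨ρ, ⟨hdom, Q, hQ, fun j hj => ?_⟩, rfl⟩
    rcases eq_or_ne j i with rfl | hji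
    · rcases hsupport with ⟨e, heQ, hleave | hskip⟩ | hroot
      exacts [Or.inl ⟨e, heQ, hleave⟩, Or.inr (Or.inr ⟨e, heQ, hskip⟩), Or.inr (Or.inl hroot)]
    rcases lt_or_ge j (layer root) with hroot | hroot
    · exact Or.inr (Or.inl hroot)
    have hjn : j < layer terminal := by simp only [Finset.mem_Icc] at hj; omega
    rcases hQ.exists_edge_leaving_or_skipping layer hroot hjn with hleave | hskip
    exacts [Or.inl (hfollow j hji hleave), Or.inr (Or.inr hskip)]

/-- A value `v ∈ D i` has support in the MDD constraint (some solution
assigns `v` to `x i`) if and only if there exists a root-to-terminal path `Q` and an edge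
`e` on `Q` such that either `e` leaves layer `i` with label `v`, or `e` strictly skips
layer `i`, or else `i` is earlier than the root's layer. -/
theorem stmt4 {V : Type} (n : ℕ) (D : ℕ → Finset ℕ) (E : Finset (V × ℕ × V))
    (layer : V → ℕ) (root terminal : V)
    (hlt : ∀ e ∈ E, layer e.1 < layer e.2.2)
    (hlab : ∀ e ∈ E, e.2.1 ∈ D (layer e.1))
    (hD : ∀ i ∈ Finset.Icc 1 n, (D i).Nonempty)
    (hterm : layer terminal = n + 1)
    (i v : ℕ) (hi : i ∈ Finset.Icc 1 n) (hv : v ∈ D i) :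
    (∃ ρ ∈ Sols n D E layer root terminal, ρ i = v) ↔
      ∃ Q, Reaches E root Q terminal ∧
        ((∃ e ∈ Q, (layer e.1 = i ∧ e.2.1 = v) ∨ (layer e.1 < i ∧ i < layer e.2.2)) ∨
          i < layer root) :=
  stmt4_general n D E layer root terminal hlab hD hterm i v hi hv
end

section
/- Suppose an MDD (with no long edges) over nonempty current domains D_1,...,D_n is uniqueness reduced and represents a nonempty, domain entailed constraint. Then every layer 1..n contains exactly one node, i.e., the MDD is a path of n+1 nodes from root to terminal, and each node in layer i has exactly |D_i| outgoing edges, all to the node in layer i+1. -/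
/-! Every node is reachable from the root. If `u` lies in layer `i ≤ n`, is reached by a path
`Q₀`, and `w ∈ D i`, extend the labels of `Q₀` together with `w` to a full assignment. By domain
entailment a root-to-terminal path spells it; since outgoing labels are distinct, that path runs
along `Q₀` to `u` and then takes an edge labelled `w`. So every node supports its whole domain,
and a downward induction from the terminal, using uniqueness reduction, collapses every layer
to a single node. -/

namespace Reaches

variable {V : Type} {E : Finset (V × ℕ × V)} {s w : V} {Q : List (V × ℕ × V)}

theorem mem_of_mem (h : Reaches E s Q w) {e : V × ℕ × V} (he : e ∈ Q) : e ∈ E := by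
  induction h with
  | nil => simp at he
  | cons hE _ ih =>
    rcases List.mem_cons.1 he with rfl | he
    · exact hE
    · exact ih he

theorem concat (h : Reaches E s Q w) {v : ℕ} {c : V} (hE : (w, v, c) ∈ E) :
    Reaches E s (Q ++ [(w, v, c)]) c := by
  induction h with
  | nil => exact .cons hE (.nil c)
  | cons hE' _ ih => exact .cons hE' (ih hE)

theorem exists_eq_append_of_labels_eq
    (hdet : ∀ (u c c' : V) (v : ℕ), (u, v, c) ∈ E → (u, v, c') ∈ E → c = c')
    (g : V → ℕ) {u : V} {Q₀ : List (V × ℕ × V)} (h₀ : Reaches E s Q₀ u)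
    (h₀g : ∀ e ∈ Q₀, e.2.1 = g e.1) (h : Reaches E s Q w) (hg : ∀ e ∈ Q, e.2.1 = g e.1)
    (hlen : Q₀.length ≤ Q.length) : ∃ Q₁, Q = Q₀ ++ Q₁ ∧ Reaches E u Q₁ w := by
  induction h₀ generalizing Q with
  | nil => exact ⟨Q, rfl, h⟩
  | @cons a b _ v Q₀ hE _ ih =>
    cases h with
    | nil => simp at hlen
    | @cons _ b' _ v' Q' hE' h' =>
      have hv : v' = v := (hg _ List.mem_cons_self).trans (h₀g _ List.mem_cons_self).symm
      subst hv
      obtain rfl := hdet a b' b v' hE' hE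
      obtain ⟨Q₁, rfl, hQ₁⟩ := ih (fun e he => h₀g e (List.mem_cons_of_mem _ he)) h'
        (fun e he => hg e (List.mem_cons_of_mem _ he)) (by simpa using hlen)
      exact ⟨Q₁, rfl, hQ₁⟩

variable {layer : V → ℕ}

theorem layer_eq_add_length (hconsec : ∀ e ∈ E, layer e.2.2 = layer e.1 + 1)
    (h : Reaches E s Q w) : layer w = layer s + Q.length := by
  induction h with
  | nil => simp
  | cons hE _ ih =>
    have := hconsec _ hE
    simp only [List.length_cons] at *
    omega

theorem layer_fst_mem_Ico (hconsec : ∀ e ∈ E, layer e.2.2 = layer e.1 + 1)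
    (h : Reaches E s Q w) {e : V × ℕ × V} (he : e ∈ Q) :
    layer e.1 ∈ Set.Ico (layer s) (layer w) := by
  induction h with
  | nil => simp at he
  | cons hE h' ih =>
    have hstep := hconsec _ hE
    have hlen := h'.layer_eq_add_length hconsec
    simp only [Set.mem_Ico] at ih hstep ⊢
    rcases List.mem_cons.1 he with rfl | he
    · simp only
      omega
    · have := ih he
      omega

theorem layer_fst_injOn (hconsec : ∀ e ∈ E, layer e.2.2 = layer e.1 + 1)
    (h : Reaches E s Q w) : Set.InjOn (fun e => layer e.1) {e | e ∈ Q} := by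
  induction h with
  | nil => simp
  | cons hE h' ih =>
    have hstep := hconsec _ hE
    intro e he e' he' heq
    rcases List.mem_cons.1 he with rfl | he <;> rcases List.mem_cons.1 he' with rfl | he'
    · rfl
    · have := (h'.layer_fst_mem_Ico hconsec he').1
      simp only at heq hstep
      omega
    · have := (h'.layer_fst_mem_Ico hconsec he).1
      simp only at heq hstep
      omega
    · exact ih he he' heq

theorem exists_layer_eq (hconsec : ∀ e ∈ E, layer e.2.2 = layer e.1 + 1)
    (h : Reaches E s Q w) {i : ℕ} (hs : layer s ≤ i) (hw : i ≤ layer w) :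
    ∃ v, layer v = i := by
  induction h with
  | @nil u => exact ⟨u, by omega⟩
  | @cons u _ _ _ _ hE _ ih =>
    have := hconsec _ hE
    by_cases hi : layer u = i
    · exact ⟨u, hi⟩
    · exact ih (by simp only at this; omega) hw

theorem exists_extension_labels (hconsec : ∀ e ∈ E, layer e.2.2 = layer e.1 + 1)
    {D : ℕ → Finset ℕ} (hlab : ∀ e ∈ E, e.2.1 ∈ D (layer e.1)) {u : V}
    (h : Reaches E s Q u) {S : Finset ℕ} {ρ₀ : ℕ → ℕ} (hρ₀ : ∀ i ∈ S, ρ₀ i ∈ D i)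
    {w : ℕ} (hw : w ∈ D (layer u)) :
    ∃ ρ : ℕ → ℕ, (∀ i ∈ S, ρ i ∈ D i) ∧ (∀ e ∈ Q, e.2.1 = ρ (layer e.1)) ∧
      ρ (layer u) = w := by
  let f : {e // e ∈ Q} → ℕ := fun e => layer e.1.1
  have hf : Function.Injective f := fun e e' heq =>
    Subtype.ext (h.layer_fst_injOn hconsec e.2 e'.2 heq)
  have hu : ¬∃ e, f e = layer u := fun ⟨e, he⟩ =>
    (h.layer_fst_mem_Ico hconsec e.2).2.ne he
  refine ⟨Function.extend f (fun e => e.1.2.1) (Function.update ρ₀ (layer u) w),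
    fun i hi => ?_, fun e he => (hf.extend_apply (fun e => e.1.2.1) _ ⟨e, he⟩).symm, ?_⟩
  · by_cases hex : ∃ e, f e = i
    · obtain ⟨e, rfl⟩ := hex
      rw [hf.extend_apply]
      exact hlab _ (h.mem_of_mem e.2)
    · rw [Function.extend_apply' _ _ _ hex]
      obtain rfl | hiu := eq_or_ne i (layer u)
      · rwa [Function.update_self]
      · rw [Function.update_of_ne hiu]
        exact hρ₀ i hi
  · rw [Function.extend_apply' _ _ _ hu, Function.update_self]

end Reaches

section Layered

variable {V : Type} {E : Finset (V × ℕ × V)} {layer : V → ℕ}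

theorem exists_reaches_of_forall_ne_exists_edge (hconsec : ∀ e ∈ E, layer e.2.2 = layer e.1 + 1)
    {s : V} (hin : ∀ u : V, u ≠ s → ∃ p w, (p, w, u) ∈ E) (u : V) : ∃ Q, Reaches E s Q u := by
  obtain rfl | hu := eq_or_ne u s
  · exact ⟨[], .nil u⟩
  obtain ⟨p, w, hp⟩ := hin u hu
  have : layer p < layer u := by
    have := hconsec _ hp
    simp only at this
    omega
  obtain ⟨Q, hQ⟩ := exists_reaches_of_forall_ne_exists_edge hconsec hin p
  exact ⟨_, hQ.concat hp⟩
termination_by layer u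

theorem exists_reaches_labels_eq_of_mem_Sols (hconsec : ∀ e ∈ E, layer e.2.2 = layer e.1 + 1)
    {n : ℕ} {D : ℕ → Finset ℕ} {root terminal : V} (hroot : layer root = 1)
    (hterm : layer terminal = n + 1) {ρ : ℕ → ℕ} (hρ : ρ ∈ Sols n D E layer root terminal) :
    ∃ Q, Reaches E root Q terminal ∧ ∀ e ∈ Q, e.2.1 = ρ (layer e.1) := by
  obtain ⟨-, Q, hQ, hcover⟩ := hρ
  refine ⟨Q, hQ, fun e he => ?_⟩
  have hi := hQ.layer_fst_mem_Ico hconsec he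
  rw [hroot, hterm, Set.mem_Ico] at hi
  rcases hcover (layer e.1) (Finset.mem_Icc.2 ⟨hi.1, by omega⟩) with
    ⟨e', he', hl, hv⟩ | hlt | ⟨e', he', hlt, hgt⟩
  · obtain rfl := hQ.layer_fst_injOn hconsec he he' hl.symm
    exact hv
  · omega
  · have := hconsec e' (hQ.mem_of_mem he')
    omega

theorem exists_edge_of_mem_domain (hconsec : ∀ e ∈ E, layer e.2.2 = layer e.1 + 1)
    {n : ℕ} {D : ℕ → Finset ℕ} (hlab : ∀ e ∈ E, e.2.1 ∈ D (layer e.1))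
    (hdet : ∀ (u c c' : V) (v : ℕ), (u, v, c) ∈ E → (u, v, c') ∈ E → c = c')
    {root terminal : V} (hroot : layer root = 1) (hterm : layer terminal = n + 1)
    (hentailed : ∀ ρ : ℕ → ℕ, (∀ i ∈ Finset.Icc 1 n, ρ i ∈ D i) →
      ρ ∈ Sols n D E layer root terminal)
    {ρ₀ : ℕ → ℕ} (hρ₀ : ∀ i ∈ Finset.Icc 1 n, ρ₀ i ∈ D i)
    {u : V} {Q₀ : List (V × ℕ × V)} (hQ₀ : Reaches E root Q₀ u) (hu : layer u ≤ n)
    {w : ℕ} (hw : w ∈ D (layer u)) : ∃ c, (u, w, c) ∈ E := by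
  obtain ⟨ρ, hρD, hρQ₀, hρu⟩ := hQ₀.exists_extension_labels hconsec hlab hρ₀ hw
  obtain ⟨Q, hQ, hρQ⟩ :=
    exists_reaches_labels_eq_of_mem_Sols hconsec hroot hterm (hentailed ρ hρD)
  have hlen : Q₀.length < Q.length := by
    have := hQ₀.layer_eq_add_length hconsec
    have := hQ.layer_eq_add_length hconsec
    omega
  obtain ⟨Q₁, rfl, hQ₁⟩ :=
    hQ₀.exists_eq_append_of_labels_eq hdet (ρ ∘ layer) hρQ₀ hQ hρQ hlen.le
  cases hQ₁ with
  | nil => simp at hlen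
  | @cons _ c _ v _ hE _ =>
    have hv : v = ρ (layer u) := hρQ _ (List.mem_append_right _ List.mem_cons_self)
    rw [hv, hρu] at hE
    exact ⟨c, hE⟩

theorem eq_of_layer_eq_of_forall_exists_edge (hconsec : ∀ e ∈ E, layer e.2.2 = layer e.1 + 1)
    {n : ℕ} {D : ℕ → Finset ℕ} (hlab : ∀ e ∈ E, e.2.1 ∈ D (layer e.1)) {t : V}
    (hterm_uniq : ∀ u : V, layer u = n + 1 → u = t)
    (huniq : ∀ u q : V, layer u = layer q →
      (∀ (w : ℕ) (c : V), (u, w, c) ∈ E ↔ (q, w, c) ∈ E) → u = q)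
    (hsupp : ∀ u : V, layer u ≤ n → ∀ w ∈ D (layer u), ∃ c, (u, w, c) ∈ E)
    {u q : V} (hl : layer u = layer q) (hu : layer u ≤ n + 1) : u = q := by
  induction hk : n + 1 - layer u generalizing u q with
  | zero => rw [hterm_uniq u (by omega), hterm_uniq q (by omega)]
  | succ k ih =>
    have hchild : ∀ a b : V, layer a = layer b → layer a = layer u →
        ∀ w c, (a, w, c) ∈ E → (b, w, c) ∈ E := by
      intro a b hab hau w c hE
      obtain ⟨c', hE'⟩ := hsupp b (by omega) w (by rw [← hab]; exact hlab _ hE)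
      have hc := hconsec _ hE
      have hc' := hconsec _ hE'
      simp only at hc hc'
      obtain rfl := ih (u := c) (q := c') (by omega) (by omega) (by omega)
      exact hE'
    exact huniq u q hl fun w c =>
      ⟨hchild u q hl rfl w c, hchild q u hl.symm hl.symm w c⟩

end Layered

theorem stmt9_general {V : Type} (n : ℕ) (D : ℕ → Finset ℕ)
    (E : Finset (V × ℕ × V)) (layer : V → ℕ) (root terminal : V)
    (hconsec : ∀ e ∈ E, layer e.2.2 = layer e.1 + 1)
    (hlab : ∀ e ∈ E, e.2.1 ∈ D (layer e.1))
    (hdistinct : ∀ (u c c' : V) (w : ℕ), (u, w, c) ∈ E → (u, w, c') ∈ E → c = c')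
    (hroot : layer root = 1) (hterm : layer terminal = n + 1)
    (hterm_uniq : ∀ u : V, layer u = n + 1 → u = terminal)
    (hin : ∀ u : V, u ≠ root → ∃ p w, (p, w, u) ∈ E)
    (huniq : ∀ u q : V, layer u = layer q →
      (∀ (w : ℕ) (c : V), (u, w, c) ∈ E ↔ (q, w, c) ∈ E) → u = q)
    (hnonempty : ∃ ρ : ℕ → ℕ, ρ ∈ Sols n D E layer root terminal)
    (hentailed : ∀ ρ : ℕ → ℕ, (∀ i ∈ Finset.Icc 1 n, ρ i ∈ D i) →
      ρ ∈ Sols n D E layer root terminal) :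
    (∀ i ∈ Finset.Icc 1 n, ∃! u : V, layer u = i) ∧
    (∀ u : V, layer u ∈ Finset.Icc 1 n →
      ∀ w : ℕ, w ∈ D (layer u) ↔ ∃ c : V, (u, w, c) ∈ E) := by
  obtain ⟨ρ₀, hρ₀, Q, hQ, -⟩ := hnonempty
  have hsupp : ∀ u : V, layer u ≤ n → ∀ w ∈ D (layer u), ∃ c, (u, w, c) ∈ E := by
    intro u hu w hw
    obtain ⟨Q₀, hQ₀⟩ := exists_reaches_of_forall_ne_exists_edge hconsec hin u
    exact exists_edge_of_mem_domain hconsec hlab hdistinct hroot hterm hentailed hρ₀ hQ₀ hu hw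
  refine ⟨fun i hi => ?_, fun u hu w => ⟨hsupp u (Finset.mem_Icc.1 hu).2 w,
    fun ⟨_, hE⟩ => hlab _ hE⟩⟩
  rw [Finset.mem_Icc] at hi
  obtain ⟨u, hu⟩ := hQ.exists_layer_eq hconsec (hroot ▸ hi.1) (by omega)
  exact ⟨u, hu, fun q hq => eq_of_layer_eq_of_forall_exists_edge hconsec hlab hterm_uniq huniq
    hsupp (hq.trans hu.symm) (by omega)⟩

/-- An MDD without long edges (every edge goes from a layer to the next,
root in layer 1, terminal in layer `n+1`, distinct outgoing labels, every non-terminal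
node has an outgoing and every non-root node an incoming edge) over nonempty current
domains which is uniqueness reduced and represents a nonempty, domain entailed constraint
has exactly one node in each layer `1..n`, and each such node supports exactly the values
of the current domain of its layer (so it has exactly `|D i|` outgoing edges, all to the
unique node of the next layer). -/
theorem stmt9 {V : Type} [Fintype V] (n : ℕ) (D : ℕ → Finset ℕ)
    (E : Finset (V × ℕ × V)) (layer : V → ℕ) (root terminal : V)
    (hconsec : ∀ e ∈ E, layer e.2.2 = layer e.1 + 1)
    (hlab : ∀ e ∈ E, e.2.1 ∈ D (layer e.1))
    (hdistinct : ∀ (u c c' : V) (w : ℕ), (u, w, c) ∈ E → (u, w, c') ∈ E → c = c')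
    (hroot : layer root = 1) (hterm : layer terminal = n + 1)
    (hlayers : ∀ u : V, 1 ≤ layer u ∧ layer u ≤ n + 1)
    (hterm_uniq : ∀ u : V, layer u = n + 1 → u = terminal)
    (hroot_uniq : ∀ u : V, layer u = 1 → u = root)
    (hout : ∀ u : V, u ≠ terminal → ∃ w c, (u, w, c) ∈ E)
    (hin : ∀ u : V, u ≠ root → ∃ p w, (p, w, u) ∈ E)
    (hD : ∀ i ∈ Finset.Icc 1 n, (D i).Nonempty)
    (huniq : ∀ u q : V, layer u = layer q →
      (∀ (w : ℕ) (c : V), (u, w, c) ∈ E ↔ (q, w, c) ∈ E) → u = q)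
    (hnonempty : ∃ ρ : ℕ → ℕ, ρ ∈ Sols n D E layer root terminal)
    (hentailed : ∀ ρ : ℕ → ℕ, (∀ i ∈ Finset.Icc 1 n, ρ i ∈ D i) →
      ρ ∈ Sols n D E layer root terminal) :
    (∀ i ∈ Finset.Icc 1 n, ∃! u : V, layer u = i) ∧
    (∀ u : V, layer u ∈ Finset.Icc 1 n →
      ∀ w : ℕ, w ∈ D (layer u) ↔ ∃ c : V, (u, w, c) ∈ E) :=
  stmt9_general n D E layer root terminal hconsec hlab hdistinct hroot hterm hterm_uniq hin huniq
    hnonempty hentailed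
end

section
/- If a node u in layer i of an MDD has all outgoing edges pointing to the same node c and the set of values labeling its outgoing edges equals the full current domain D_i, then replacing u and its outgoing edges by redirecting each incoming edge (p,u) into a long edge (p,c) (skipping layer i, preserving the incoming edge's label) does not change the set of solutions with respect to the current domains. -/
def EdgeSupports {V : Type} (layer : V → ℕ) (e : V × ℕ × V) (i v : ℕ) : Prop :=
  (layer e.1 = i ∧ e.2.1 = v) ∨ (layer e.1 < i ∧ i < layer e.2.2)

def Supports {V : Type} (layer : V → ℕ) (Q : List (V × ℕ × V)) (i v : ℕ) : Prop :=
  ∃ e ∈ Q, EdgeSupports layer e i v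

def bypass {V : Type} [DecidableEq V] (E : Finset (V × ℕ × V)) (u c : V) : Finset (V × ℕ × V) :=
  (E.filter fun e => e.1 ≠ u ∧ e.2.2 ≠ u) ∪
    ((E.filter fun e => e.2.2 = u).image fun e => (e.1, e.2.1, c))

section
variable {V : Type} {layer : V → ℕ}

theorem edgeSupports_merge {x u c : V} {a b i v : ℕ}
    (hxu : layer x < layer u) (huc : layer u < layer c)
    (h : EdgeSupports layer (x, a, u) i v ∨ EdgeSupports layer (u, b, c) i v) :
    EdgeSupports layer (x, a, c) i v := by
  simp only [EdgeSupports] at h ⊢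
  omega

theorem edgeSupports_split {x u c : V} {a b i w : ℕ}
    (hxu : layer x < layer u) (huc : layer u < layer c)
    (h : EdgeSupports layer (x, a, c) i w) (hw : i = layer u → w = b) :
    EdgeSupports layer (x, a, u) i w ∨ EdgeSupports layer (u, b, c) i w := by
  simp only [EdgeSupports] at h ⊢
  omega

theorem supports_cons {e : V × ℕ × V} {Q : List (V × ℕ × V)} {i v : ℕ} :
    Supports layer (e :: Q) i v ↔ EdgeSupports layer e i v ∨ Supports layer Q i v := by
  simp only [Supports, List.mem_cons, exists_eq_or_imp]

end

section
variable {V : Type} [DecidableEq V] {E : Finset (V × ℕ × V)} {layer : V → ℕ} {u c : V}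

theorem mem_bypass {e : V × ℕ × V} :
    e ∈ bypass E u c ↔ (e ∈ E ∧ e.1 ≠ u ∧ e.2.2 ≠ u) ∨ (e.2.2 = c ∧ (e.1, e.2.1, u) ∈ E) := by
  obtain ⟨x, a, y⟩ := e
  simp only [bypass, Finset.mem_union, Finset.mem_filter, Finset.mem_image, Prod.mk.injEq,
    Prod.exists]
  constructor
  · rintro (h | ⟨x', a', y', ⟨h, rfl⟩, rfl, rfl, rfl⟩)
    · exact Or.inl h
    · exact Or.inr ⟨rfl, h⟩
  · rintro (h | ⟨rfl, h⟩)
    · exact Or.inl h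
    · exact Or.inr ⟨x, a, u, ⟨h, rfl⟩, rfl, rfl, rfl⟩

theorem Reaches.to_bypass (hlt : ∀ e ∈ E, layer e.1 < layer e.2.2)
    (hout : ∀ e ∈ E, e.1 = u → e.2.2 = c) :
    ∀ {x y : V} {Q : List (V × ℕ × V)}, Reaches E x Q y → x ≠ u → y ≠ u →
      ∃ Q', Reaches (bypass E u c) x Q' y ∧ ∀ i v, Supports layer Q i v → Supports layer Q' i v
  | _, _, _, .nil _, _, _ => ⟨[], .nil _, fun _ _ h => h⟩
  | x, y, _, .cons (v := a) (c := b) he hrest, hx, hy => by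
    by_cases hb : b = u
    · subst b
      cases hrest with
      | nil => exact absurd rfl hy
      | @cons _ b _ a' _ he' hrest' =>
        have hb : b = c := hout _ he' rfl
        subst b
        have hxu : layer x < layer u := hlt _ he
        have huc : layer u < layer c := hlt _ he'
        obtain ⟨Q', hQ', hsub⟩ :=
          Reaches.to_bypass hlt hout hrest' (ne_of_apply_ne layer huc.ne') hy
        refine ⟨(x, a, c) :: Q', .cons (mem_bypass.2 (Or.inr ⟨rfl, he⟩)) hQ', fun i v h => ?_⟩
        rw [supports_cons, supports_cons] at h
        rw [supports_cons]
        rcases h with h | h | h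
        · exact Or.inl (edgeSupports_merge (b := a') hxu huc (Or.inl h))
        · exact Or.inl (edgeSupports_merge (b := a') hxu huc (Or.inr h))
        · exact Or.inr (hsub i v h)
    · obtain ⟨Q', hQ', hsub⟩ := Reaches.to_bypass hlt hout hrest hb hy
      refine ⟨(x, a, b) :: Q', .cons (mem_bypass.2 (Or.inl ⟨he, hx, hb⟩)) hQ', fun i v h => ?_⟩
      rw [supports_cons] at h ⊢
      exact h.imp_right (hsub i v)
termination_by _ _ Q => Q.length

theorem Reaches.of_bypass (hlt : ∀ e ∈ E, layer e.1 < layer e.2.2) {v : ℕ} (hv : (u, v, c) ∈ E)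
    {x y : V} {Q : List (V × ℕ × V)} (h : Reaches (bypass E u c) x Q y) :
    ∃ Q', Reaches E x Q' y ∧
      ∀ i w, Supports layer Q i w → (i = layer u → w = v) → Supports layer Q' i w := by
  induction h with
  | nil z => exact ⟨[], .nil z, fun _ _ h _ => h⟩
  | @cons a b _ lab _ he _ ih =>
    obtain ⟨Q', hQ', hsub⟩ := ih
    rcases mem_bypass.1 he with ⟨hkept, -, -⟩ | ⟨hb, hin⟩
    · refine ⟨(a, lab, b) :: Q', .cons hkept hQ', fun i w h hw => ?_⟩
      rw [supports_cons] at h ⊢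
      exact h.imp_right (hsub i w · hw)
    · obtain rfl : b = c := hb
      refine ⟨(a, lab, u) :: (u, v, b) :: Q', .cons hin (.cons hv hQ'), fun i w h hw => ?_⟩
      rw [supports_cons] at h
      rw [supports_cons, supports_cons, ← or_assoc]
      exact h.imp (edgeSupports_split (hlt _ hin) (hlt _ hv) · hw) (hsub i w · hw)

end

section
variable {V : Type} {n : ℕ} {D : ℕ → Finset ℕ} {layer : V → ℕ} {root terminal : V}

theorem mem_sols_iff {E : Finset (V × ℕ × V)} {ρ : ℕ → ℕ} :
    ρ ∈ Sols n D E layer root terminal ↔ (∀ i ∈ Finset.Icc 1 n, ρ i ∈ D i) ∧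
      ∃ Q, Reaches E root Q terminal ∧
        ∀ i ∈ Finset.Icc 1 n, Supports layer Q i (ρ i) ∨ i < layer root := by
  simp only [Sols, Supports, EdgeSupports, Set.mem_ofPred_eq, and_or_left, exists_or,
    or_right_comm, or_assoc]

theorem sols_subset_sols {E E' : Finset (V × ℕ × V)}
    (h : ∀ ρ : ℕ → ℕ, (∀ i ∈ Finset.Icc 1 n, ρ i ∈ D i) → ∀ Q, Reaches E root Q terminal →
      ∃ Q', Reaches E' root Q' terminal ∧
        ∀ i ∈ Finset.Icc 1 n, Supports layer Q i (ρ i) → Supports layer Q' i (ρ i)) :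
    Sols n D E layer root terminal ⊆ Sols n D E' layer root terminal := by
  intro ρ
  rw [mem_sols_iff, mem_sols_iff]
  rintro ⟨hdom, Q, hQ, hcov⟩
  obtain ⟨Q', hQ', hsub⟩ := h ρ hdom Q hQ
  exact ⟨hdom, Q', hQ', fun i hi => (hcov i hi).imp_left (hsub i hi)⟩

end

theorem stmt14_general {V : Type} [DecidableEq V] (n : ℕ) (D : ℕ → Finset ℕ)
    (E₁ : Finset (V × ℕ × V)) (layer : V → ℕ) (root terminal : V)
    (u c : V)
    (hroot : u ≠ root) (hterminal : u ≠ terminal)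
    (hlt : ∀ e ∈ E₁, layer e.1 < layer e.2.2)
    (hDne : (D (layer u)).Nonempty)
    (hallc : ∀ e ∈ E₁, e.1 = u → e.2.2 = c)
    (hfull : ∀ w : ℕ, (u, w, c) ∈ E₁ ↔ w ∈ D (layer u))
    (E₂ : Finset (V × ℕ × V))
    (hE₂ : E₂ = (E₁.filter fun e => e.1 ≠ u ∧ e.2.2 ≠ u) ∪
      ((E₁.filter fun e => e.2.2 = u).image fun e => (e.1, e.2.1, c))) :
    Sols n D E₂ layer root terminal = Sols n D E₁ layer root terminal := by
  obtain rfl : E₂ = bypass E₁ u c := hE₂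
  refine Set.Subset.antisymm (sols_subset_sols fun ρ hdom Q hQ => ?_)
    (sols_subset_sols fun ρ _ Q hQ => ?_)
  · obtain ⟨v, hvD, hvρ⟩ : ∃ v ∈ D (layer u), layer u ∈ Finset.Icc 1 n → ρ (layer u) = v := by
      by_cases hu : layer u ∈ Finset.Icc 1 n
      · exact ⟨ρ (layer u), hdom _ hu, fun _ => rfl⟩
      · obtain ⟨v₀, hv₀⟩ := hDne
        exact ⟨v₀, hv₀, fun h => absurd h hu⟩
    obtain ⟨Q', hQ', hsub⟩ := hQ.of_bypass hlt ((hfull v).2 hvD)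
    exact ⟨Q', hQ', fun i hi h => hsub i _ h (by rintro rfl; exact hvρ hi)⟩
  · obtain ⟨Q', hQ', hsub⟩ := hQ.to_bypass hlt hallc (Ne.symm hroot) (Ne.symm hterminal)
    exact ⟨Q', hQ', fun i _ => hsub i (ρ i)⟩

/-- If a node `u` in layer `i` has all its outgoing edges pointing to the
same node `c` and the labels of those edges are exactly the full current domain `D i`,
then deleting `u` and its outgoing edges and turning every incoming edge `(p, w, u)` into
the long edge `(p, w, c)` (which now skips layer `i`, where a long edge supports every
current domain value of each skipped layer) does not change the set of solutions with
respect to the current domains. -/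
theorem stmt14 {V : Type} [DecidableEq V] (n : ℕ) (D : ℕ → Finset ℕ)
    (E₁ : Finset (V × ℕ × V)) (layer : V → ℕ) (root terminal : V)
    (u c : V) (huc : u ≠ c)
    (hroot : u ≠ root) (hterminal : u ≠ terminal)
    (hlt : ∀ e ∈ E₁, layer e.1 < layer e.2.2)
    (hDne : (D (layer u)).Nonempty)
    (hallc : ∀ e ∈ E₁, e.1 = u → e.2.2 = c)
    (hfull : ∀ w : ℕ, (u, w, c) ∈ E₁ ↔ w ∈ D (layer u))
    (E₂ : Finset (V × ℕ × V))
    (hE₂ : E₂ = (E₁.filter fun e => e.1 ≠ u ∧ e.2.2 ≠ u) ∪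
      ((E₁.filter fun e => e.2.2 = u).image fun e => (e.1, e.2.1, c))) :
    Sols n D E₂ layer root terminal = Sols n D E₁ layer root terminal :=
  stmt14_general n D E₁ layer root terminal u c hroot hterminal hlt hDne hallc hfull E₂ hE₂
end

section
/- Uniqueness reduction by bottom-up merging is confluent in the following sense: a merge of two redundant nodes in layer i can create new redundancies only in layers strictly earlier than i, never in later layers; consequently, processing dirty nodes in decreasing-layer order yields a uniqueness reduced MDD. -/
/-- confluence of bottom-up uniqueness reduction: a merge of two redundant
nodes in layer `i` can create new redundancies only in layers strictly earlier than `i`.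
Precisely: if all layers `≥ i` are uniqueness reduced except for the redundant pair
`{u, q}` in layer `i`, and `u` is merged into `q` (incoming edges of `u` are redirected to
`q`, `u` and its outgoing edges are deleted), then in the resulting MDD all layers `≥ i`
are uniqueness reduced (among the remaining nodes).  Hence processing dirty nodes in
decreasing-layer order yields a uniqueness reduced MDD. -/
theorem stmt15 {V : Type} [DecidableEq V]
    (E₁ : Finset (V × ℕ × V)) (layer : V → ℕ) (i : ℕ)
    (hlt : ∀ e ∈ E₁, layer e.1 < layer e.2.2)
    (u q : V) (huq : u ≠ q) (hu : layer u = i) (hq : layer q = i)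
    (hchild : ∀ (w : ℕ) (c : V), (u, w, c) ∈ E₁ ↔ (q, w, c) ∈ E₁)
    (hred : ∀ a b : V, layer a = layer b → i ≤ layer a →
      (∀ (w : ℕ) (c : V), (a, w, c) ∈ E₁ ↔ (b, w, c) ∈ E₁) →
      a = b ∨ ({a, b} : Set V) = {u, q})
    (E₂ : Finset (V × ℕ × V))
    (hE₂ : E₂ = (E₁.filter fun e => e.1 ≠ u ∧ e.2.2 ≠ u) ∪
      ((E₁.filter fun e => e.2.2 = u).image fun e => (e.1, e.2.1, q))) :
    ∀ a b : V, a ≠ u → b ≠ u → layer a = layer b → i ≤ layer a →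
      (∀ (w : ℕ) (c : V), (a, w, c) ∈ E₂ ↔ (b, w, c) ∈ E₂) → a = b := by
  intro a b ha hb hab hi hch
  -- For x ≠ u with layer x ≥ i, outgoing edges are unchanged.
  have key : ∀ x : V, x ≠ u → i ≤ layer x → ∀ (w : ℕ) (c : V),
      ((x, w, c) ∈ E₂ ↔ (x, w, c) ∈ E₁) := by
    intro x hx hxi w c
    subst hE₂
    simp only [Finset.mem_union, Finset.mem_filter, Finset.mem_image]
    constructor
    · rintro (⟨h, _⟩ | ⟨e, ⟨he, heu⟩, heq⟩)
      · exact h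
      · -- e = (x, w, u) up to components; impossible since layer u > layer x ≥ i
        obtain ⟨e1, e2, e3⟩ := e
        simp only [Prod.mk.injEq] at heq
        obtain ⟨h1, h2, _⟩ := heq
        subst h1; subst h2
        simp only at heu
        subst heu
        have := hlt _ he
        simp only at this
        omega
    · intro h
      left
      refine ⟨h, hx, ?_⟩
      have := hlt _ h
      simp only at this
      intro hcu
      rw [hcu] at this
      omega
  have hE1 : ∀ (w : ℕ) (c : V), (a, w, c) ∈ E₁ ↔ (b, w, c) ∈ E₁ := by
    intro w c
    rw [← key a ha hi, ← key b hb (hab ▸ hi)]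
    exact hch w c
  rcases hred a b hab hi hE1 with h | h
  · exact h
  · exfalso
    have : u ∈ ({a, b} : Set V) := by rw [h]; simp
    rcases this with h' | h'
    · exact ha h'.symm
    · exact hb h'.symm
end
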